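/- arXiv:1310.6128 — 7 statements merged into one kernel-verified Lean document; each statement's English description precedes it below -/
import Mathlib

section
/- There is a universal constant C < ∞ such that for every x ∈ [0,1/2]² with x ≠ (0,0): ∫_{Q(2x)} y₁ x₂ / ( |x−y|² |x−ỹ|² ) dy ≤ C, where Q(2x) := [2x₁,1] × [2x₂,1] and ỹ := (−y₁, y₂). -/
open MeasureTheory Set

/-!
With p = (0, x₂), on Q(2x) one has |x - y| ≥ |y - p| / 2 (as y₁ ≥ 2x₁) and |x - ỹ| ≥ |y - p|
(as x₁, y₁ ≥ 0), so the kernel is at most 4 y₁ x₂ / |y - p|⁴. Integrating first in y₁ gives at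
most 2 x₂ / (y₂ - x₂)², whose integral over y₂ ≥ 2 x₂ is at most 2; hence C = 2.
-/

lemma lintegral_Icc_ofReal_deriv_le {f f' : ℝ → ℝ} {a b : ℝ}
    (hf : ∀ x ∈ Icc a b, HasDerivAt f (f' x) x) (hf' : ∀ x ∈ Icc a b, 0 ≤ f' x) :
    ∫⁻ x in Icc a b, ENNReal.ofReal (f' x) ≤ ENNReal.ofReal (f b - f a) := by
  have hmono : MonotoneOn f (Icc a b) :=
    monotoneOn_of_hasDerivWithinAt_nonneg (convex_Icc a b)
      (fun x hx ↦ (hf x hx).continuousAt.continuousWithinAt)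
      (fun x hx ↦ (hf x (interior_subset hx)).hasDerivWithinAt)
      (fun x hx ↦ hf' x (interior_subset hx))
  calc ∫⁻ x in Icc a b, ENNReal.ofReal (f' x)
      = volume (f '' Icc a b) := lintegral_deriv_eq_volume_image_of_monotoneOn
          measurableSet_Icc (fun x hx ↦ (hf x hx).hasDerivWithinAt) hmono
    _ ≤ volume (Icc (f a) (f b)) := measure_mono hmono.image_Icc_subset
    _ = ENNReal.ofReal (f b - f a) := Real.volume_Icc

lemma lintegral_Icc_ofReal_mul_div_sq_add_sq_sq_le {c a b t : ℝ} (hc : 0 ≤ c) (ha : 0 ≤ a)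
    (ht : t ≠ 0) :
    ∫⁻ u in Icc a b, ENNReal.ofReal (c * (2 * u) / (u ^ 2 + t ^ 2) ^ 2)
      ≤ ENNReal.ofReal (c / t ^ 2) := by
  have hderiv (u : ℝ) :
      HasDerivAt (fun u ↦ -c / (u ^ 2 + t ^ 2)) (c * (2 * u) / (u ^ 2 + t ^ 2) ^ 2) u :=
    ((hasDerivAt_const u (-c)).fun_div ((hasDerivAt_pow 2 u).add_const (t ^ 2))
      (by positivity)).congr_deriv (by simp)
  refine (lintegral_Icc_ofReal_deriv_le (fun u _ ↦ hderiv u) fun u hu ↦ ?_).trans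
    (ENNReal.ofReal_le_ofReal ?_)
  · have : 0 ≤ u := ha.trans hu.1
    positivity
  · have hb : 0 ≤ c / (b ^ 2 + t ^ 2) := by positivity
    have ha : c / (a ^ 2 + t ^ 2) ≤ c / t ^ 2 :=
      div_le_div_of_nonneg_left hc (by positivity) (by nlinarith)
    linarith [neg_div (b ^ 2 + t ^ 2) c, neg_div (a ^ 2 + t ^ 2) c]

lemma lintegral_Icc_ofReal_div_sub_sq_le {k c b : ℝ} (hk : 0 ≤ k) (hc : 0 < c) (hcb : c ≤ b) :
    ∫⁻ v in Icc (2 * c) b, ENNReal.ofReal (k / (v - c) ^ 2) ≤ ENNReal.ofReal (k / c) := by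
  have hderiv (v : ℝ) (hv : v - c ≠ 0) : HasDerivAt (fun v ↦ -k / (v - c)) (k / (v - c) ^ 2) v :=
    ((hasDerivAt_const v (-k)).fun_div ((hasDerivAt_id v).sub_const c) hv).congr_deriv (by simp)
  refine (lintegral_Icc_ofReal_deriv_le (fun v hv ↦ hderiv v (by linarith [hv.1]))
    fun v _ ↦ by positivity).trans (ENNReal.ofReal_le_ofReal ?_)
  have : 0 ≤ k / (b - c) := div_nonneg hk (by linarith)
  rw [show 2 * c - c = c by ring]
  linarith [neg_div (b - c) k, neg_div c k]

lemma kernel_le_of_two_mul_le {x₁ x₂ y₁ y₂ : ℝ} (hx₁ : 0 ≤ x₁) (hx₂ : 0 < x₂) (hy₁ : 2 * x₁ ≤ y₁)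
    (hy₂ : 2 * x₂ ≤ y₂) :
    y₁ * x₂ / (((x₁ - y₁) ^ 2 + (x₂ - y₂) ^ 2) * ((x₁ + y₁) ^ 2 + (x₂ - y₂) ^ 2))
      ≤ 2 * x₂ * (2 * y₁) / (y₁ ^ 2 + (y₂ - x₂) ^ 2) ^ 2 := by
  have hy₂x₂ : 0 < y₂ - x₂ := by linarith
  set d := y₁ ^ 2 + (y₂ - x₂) ^ 2
  have hd : 0 < d := by positivity
  have hnear : d ≤ 4 * ((x₁ - y₁) ^ 2 + (x₂ - y₂) ^ 2) := by
    nlinarith [mul_nonneg (sub_nonneg.2 hy₁) (by linarith : 0 ≤ 3 * y₁ - 2 * x₁)]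
  have hfar : d ≤ (x₁ + y₁) ^ 2 + (x₂ - y₂) ^ 2 := by
    nlinarith [mul_nonneg hx₁ (by linarith : 0 ≤ y₁)]
  calc y₁ * x₂ / (((x₁ - y₁) ^ 2 + (x₂ - y₂) ^ 2) * ((x₁ + y₁) ^ 2 + (x₂ - y₂) ^ 2))
      ≤ y₁ * x₂ / (d / 4 * d) := by
        gcongr
        · exact mul_nonneg (by linarith) hx₂.le
        · linarith
    _ = 2 * x₂ * (2 * y₁) / d ^ 2 := by field_simp; ring

/-- **Uniform bound on Q(2x) (Zlatoš, proof of Lemma 2.1).**  There is a universal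
constant C such that for all x ∈ [0,1/2]² with x ≠ 0,
∫_{Q(2x)} y₁x₂/(|x-y|²|x-ỹ|²) dy ≤ C, where ỹ = (-y₁,y₂). -/
theorem Q2x_kernel_integral_bound :
    ∃ C : ℝ, ∀ x : ℝ × ℝ,
      x ∈ Set.Icc ((0 : ℝ), (0 : ℝ)) ((1 / 2 : ℝ), (1 / 2 : ℝ)) → x ≠ (0, 0) →
      (∫⁻ y in Set.Icc (2 * x.1, 2 * x.2) ((1 : ℝ), (1 : ℝ)),
          ENNReal.ofReal (y.1 * x.2 /
            (((x.1 - y.1) ^ 2 + (x.2 - y.2) ^ 2) *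
              ((x.1 + y.1) ^ 2 + (x.2 - y.2) ^ 2)))) ≤ ENNReal.ofReal C := by
  refine ⟨2, fun x hx _ ↦ ?_⟩
  simp only [Icc_prod_eq, mem_prod, mem_Icc] at hx ⊢
  obtain ⟨⟨hx₁, -⟩, hx₂, hx₂'⟩ := hx
  rcases hx₂.eq_or_lt with h | hx₂
  · simp [← h]
  calc _ ≤ ∫⁻ y in Icc (2 * x.1) 1 ×ˢ Icc (2 * x.2) 1,
          ENNReal.ofReal (2 * x.2 * (2 * y.1) / (y.1 ^ 2 + (y.2 - x.2) ^ 2) ^ 2) :=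
        setLIntegral_mono' (measurableSet_Icc.prod measurableSet_Icc)
          fun y ⟨⟨hy₁, _⟩, hy₂, _⟩ ↦
          ENNReal.ofReal_le_ofReal (kernel_le_of_two_mul_le hx₁ hx₂ hy₁ hy₂)
    _ = ∫⁻ v in Icc (2 * x.2) 1, ∫⁻ u in Icc (2 * x.1) 1,
          ENNReal.ofReal (2 * x.2 * (2 * u) / (u ^ 2 + (v - x.2) ^ 2) ^ 2) := by
        rw [Measure.volume_eq_prod, setLIntegral_prod_symm]
        fun_prop
    _ ≤ ∫⁻ v in Icc (2 * x.2) 1, ENNReal.ofReal (2 * x.2 / (v - x.2) ^ 2) :=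
        setLIntegral_mono' measurableSet_Icc fun v hv ↦
          lintegral_Icc_ofReal_mul_div_sq_add_sq_sq_le (by positivity) (by linarith)
            (by linarith [hv.1])
    _ ≤ ENNReal.ofReal (2 * x.2 / x.2) :=
        lintegral_Icc_ofReal_div_sub_sq_le (by positivity) hx₂ (by linarith)
    _ = ENNReal.ofReal 2 := by rw [mul_div_cancel_right₀ _ hx₂.ne']
end

section
/- There is a universal constant C < ∞ such that for every x ∈ [0,1/2]² with x ≠ (0,0) and every y ∈ Q(2x) with y ≠ (0,0): | y₁ y₂ / ( |x−y|² |x−ỹ|² ) − y₁ y₂ / |y|⁴ | ≤ C |x| / |y|³, where Q(2x) := [2x₁,1] × [2x₂,1] and ỹ := (−y₁, y₂). -/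
/-!
Write `s = |x|`, `t = |y|`, `A = |x - y|²` and `B = |x - ỹ|²`. Since `x` lies in the box
`[0, y₁/2] × [0, y₂/2]`, both `A` and `B` are at least `t²/4`, and by Cauchy–Schwarz both differ
from `t²` by at most `3st`, so `|AB - t⁴| ≤ 15st³`. With `y₁y₂ ≤ t²/2` this gives
`|y₁y₂/(AB) - y₁y₂/t⁴| = y₁y₂ |t⁴ - AB| / (AB t⁴) ≤ 120 s / t³`.
-/

lemma abs_mul_add_mul_le_sqrt_mul_sqrt (a b c d : ℝ) :
    |a * c + b * d| ≤ √(a ^ 2 + b ^ 2) * √(c ^ 2 + d ^ 2) := by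
  rw [← Real.sqrt_mul (by positivity)]
  exact Real.abs_le_sqrt (by nlinarith [sq_nonneg (a * d - b * c)])

lemma abs_dist_sq_sub_sq_le {a b c d : ℝ} (h : a ^ 2 + b ^ 2 ≤ c ^ 2 + d ^ 2) :
    |(a - c) ^ 2 + (b - d) ^ 2 - (c ^ 2 + d ^ 2)| ≤
      3 * (√(a ^ 2 + b ^ 2) * √(c ^ 2 + d ^ 2)) := by
  set s := √(a ^ 2 + b ^ 2)
  set t := √(c ^ 2 + d ^ 2)
  have hs : s ^ 2 = a ^ 2 + b ^ 2 := Real.sq_sqrt (by positivity)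
  have hst : s ≤ t := Real.sqrt_le_sqrt h
  have hss : s ^ 2 ≤ s * t := by
    rw [sq]; exact mul_le_mul_of_nonneg_left hst (Real.sqrt_nonneg _)
  have hcs := abs_le.mp (abs_mul_add_mul_le_sqrt_mul_sqrt a b c d)
  have hexpand : (a - c) ^ 2 + (b - d) ^ 2 - (c ^ 2 + d ^ 2) = s ^ 2 - 2 * (a * c + b * d) := by
    rw [hs]; ring
  rw [hexpand, abs_le]
  constructor <;> nlinarith [sq_nonneg s]

lemma abs_mul_sub_sq_le {A B T e : ℝ} (hA : |A - T| ≤ e) (hB : |B - T| ≤ e) (hT : 0 ≤ T) :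
    |A * B - T ^ 2| ≤ 2 * T * e + e ^ 2 := by
  have he : 0 ≤ e := (abs_nonneg _).trans hA
  calc |A * B - T ^ 2| = |T * (A - T) + T * (B - T) + (A - T) * (B - T)| := by ring_nf
    _ ≤ T * |A - T| + T * |B - T| + |A - T| * |B - T| := by
        rw [← abs_of_nonneg hT, ← abs_mul, ← abs_mul, ← abs_mul, abs_of_nonneg hT]
        exact abs_add_three _ _ _
    _ ≤ T * e + T * e + e * e := by gcongr
    _ = 2 * T * e + e ^ 2 := by ring

lemma sq_add_sq_div_four_le_dist_sq {p q u v : ℝ} (hp : 0 ≤ p) (hq : 0 ≤ q) (hpu : 2 * p ≤ u)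
    (hqv : 2 * q ≤ v) : (u ^ 2 + v ^ 2) / 4 ≤ (p - u) ^ 2 + (q - v) ^ 2 := by
  have hu : (u / 2) ^ 2 ≤ (u - p) ^ 2 := pow_le_pow_left₀ (by linarith) (by linarith) 2
  have hv : (v / 2) ^ 2 ≤ (v - q) ^ 2 := pow_le_pow_left₀ (by linarith) (by linarith) 2
  nlinarith

lemma abs_sq_sub_mul_dist_sq_le {p q u v : ℝ} (h : p ^ 2 + q ^ 2 ≤ u ^ 2 + v ^ 2) :
    |(u ^ 2 + v ^ 2) ^ 2 - ((p - u) ^ 2 + (q - v) ^ 2) * ((p + u) ^ 2 + (q - v) ^ 2)| ≤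
      15 * √(p ^ 2 + q ^ 2) * √(u ^ 2 + v ^ 2) ^ 3 := by
  set s := √(p ^ 2 + q ^ 2)
  set t := √(u ^ 2 + v ^ 2)
  have ht_sq : t ^ 2 = u ^ 2 + v ^ 2 := Real.sq_sqrt (by positivity)
  have hs : 0 ≤ s := Real.sqrt_nonneg _
  have hss : s * s ≤ s * t := mul_le_mul_of_nonneg_left (Real.sqrt_le_sqrt h) hs
  have hA : |(p - u) ^ 2 + (q - v) ^ 2 - t ^ 2| ≤ 3 * (s * t) := by
    rw [ht_sq]; exact abs_dist_sq_sub_sq_le h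
  -- `|x - ỹ|²` is the case `c = -y₁` of the same bound, since `|ỹ| = |y|`
  have hB : |(p + u) ^ 2 + (q - v) ^ 2 - t ^ 2| ≤ 3 * (s * t) := by
    rw [ht_sq]
    simpa using abs_dist_sq_sub_sq_le (a := p) (b := q) (c := -u) (d := v) (by simpa using h)
  rw [← ht_sq, abs_sub_comm]
  calc _ ≤ 2 * t ^ 2 * (3 * (s * t)) + (3 * (s * t)) ^ 2 := abs_mul_sub_sq_le hA hB (sq_nonneg t)
    _ ≤ 15 * s * t ^ 3 := by nlinarith [sq_nonneg t]

lemma abs_kernel_sub_le {p q u v : ℝ} (hp : 0 ≤ p) (hq : 0 ≤ q) (hpu : 2 * p ≤ u)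
    (hqv : 2 * q ≤ v) (huv : 0 < u ^ 2 + v ^ 2) :
    |u * v / (((p - u) ^ 2 + (q - v) ^ 2) * ((p + u) ^ 2 + (q - v) ^ 2)) -
        u * v / (u ^ 2 + v ^ 2) ^ 2| ≤
      120 * √(p ^ 2 + q ^ 2) / √(u ^ 2 + v ^ 2) ^ 3 := by
  have hu : 0 ≤ u := by linarith
  have hv : 0 ≤ v := by linarith
  have hxy : p ^ 2 + q ^ 2 ≤ u ^ 2 + v ^ 2 := by
    have := pow_le_pow_left₀ hp (by linarith : p ≤ u) 2
    have := pow_le_pow_left₀ hq (by linarith : q ≤ v) 2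
    linarith
  have hAB := abs_sq_sub_mul_dist_sq_le hxy
  have hA_lower := sq_add_sq_div_four_le_dist_sq hp hq hpu hqv
  set s := √(p ^ 2 + q ^ 2)
  set t := √(u ^ 2 + v ^ 2)
  set A := (p - u) ^ 2 + (q - v) ^ 2
  set B := (p + u) ^ 2 + (q - v) ^ 2
  have ht_sq : t ^ 2 = u ^ 2 + v ^ 2 := Real.sq_sqrt huv.le
  rw [← ht_sq] at hAB hA_lower ⊢
  have hB_lower : t ^ 2 / 4 ≤ B := hA_lower.trans (by nlinarith [mul_nonneg hp hu])
  have huv_le : u * v ≤ t ^ 2 / 2 := by nlinarith [sq_nonneg (u - v)]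
  have ht : 0 < t := Real.sqrt_pos.mpr huv
  have hA_pos : 0 < A := lt_of_lt_of_le (by positivity) hA_lower
  have hB_pos : 0 < B := lt_of_lt_of_le (by positivity) hB_lower
  have hdiff : u * v / (A * B) - u * v / (t ^ 2) ^ 2 =
      u * v * ((t ^ 2) ^ 2 - A * B) / (A * B * (t ^ 2) ^ 2) := by
    field_simp
  rw [hdiff, abs_div, abs_mul (u * v), abs_of_nonneg (mul_nonneg hu hv),
    abs_of_pos (by positivity : 0 < A * B * (t ^ 2) ^ 2)]
  calc _ ≤ t ^ 2 / 2 * (15 * s * t ^ 3) / (t ^ 2 / 4 * (t ^ 2 / 4) * (t ^ 2) ^ 2) := by gcongr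
    _ = 120 * s / t ^ 3 := by field_simp; ring

/-- **Pointwise kernel comparison on Q(2x) (Zlatoš, proof of Lemma 2.1).**  There is a
universal constant C such that for all x ∈ [0,1/2]² with x ≠ 0 and all
y ∈ Q(2x) = [2x₁,1]×[2x₂,1] with y ≠ 0,
| y₁y₂/(|x-y|²|x-ỹ|²) - y₁y₂/|y|⁴ | ≤ C|x|/|y|³, where ỹ = (-y₁,y₂). -/
theorem kernel_pointwise_comparison :
    ∃ C : ℝ, ∀ x y : ℝ × ℝ,
      x ∈ Set.Icc ((0 : ℝ), (0 : ℝ)) ((1 / 2 : ℝ), (1 / 2 : ℝ)) → x ≠ (0, 0) →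
      y ∈ Set.Icc (2 * x.1, 2 * x.2) ((1 : ℝ), (1 : ℝ)) → y ≠ (0, 0) →
      |y.1 * y.2 /
            (((x.1 - y.1) ^ 2 + (x.2 - y.2) ^ 2) *
              ((x.1 + y.1) ^ 2 + (x.2 - y.2) ^ 2)) -
          y.1 * y.2 / (y.1 ^ 2 + y.2 ^ 2) ^ 2| ≤
        C * Real.sqrt (x.1 ^ 2 + x.2 ^ 2) / Real.sqrt (y.1 ^ 2 + y.2 ^ 2) ^ 3 := by
  refine ⟨120, ?_⟩
  rintro ⟨p, q⟩ ⟨u, v⟩ ⟨⟨hp, hq⟩, -⟩ - ⟨⟨hpu, hqv⟩, -⟩ hy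
  have huv : 0 < u ^ 2 + v ^ 2 := by
    by_contra! h
    have hu : u = 0 := by nlinarith [sq_nonneg u, sq_nonneg v]
    have hv : v = 0 := by nlinarith [sq_nonneg u, sq_nonneg v]
    exact hy (by rw [hu, hv])
  exact abs_kernel_sub_le hp hq hpu hqv huv
end

section
/- There is a universal constant C < ∞ such that for every x ∈ [0,1/2]² with x ≠ (0,0): ∫_{Q(2x)} | y₁ y₂ / ( |x−y|² |x−ỹ|² ) − y₁ y₂ / |y|⁴ | dy ≤ C, where Q(2x) := [2x₁,1] × [2x₂,1] and ỹ := (−y₁, y₂). -/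
/-!
On `Q(2x)` we have `y ≥ 2x` coordinatewise, so `|x - y|²` and `|x - ỹ|²` are both at least
`|y|² / 4` and differ from `|y|²` by `O(⟪x, y⟫)`. Hence the integrand is at most
`64 ⟪x, y⟫ / |y|⁴ ≤ 64 (x₁ / (y₁ |y|²) + x₂ / (y₂ |y|²))`. Integrating the first term in `y₂`
first gives `∫₀¹ y₁ / (y₁² + t²) dt ≤ π / 2`, and then `x₁ ∫_{2x₁}^1 y₁⁻² dy₁ ≤ 1 / 2`;
the scale `x₁` cancels, so the bound is uniform in `x`.
-/

open MeasureTheory Set Real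

theorem abs_div_mul_sub_div_sq_le {A B R p q : ℝ} (hR : 0 < R) (hA : R / 4 ≤ A) (hB : R / 4 ≤ B)
    (hAR : |A - R| ≤ 2 * p) (hBR : |B - R| ≤ 3 * p) (hpR : p ≤ R / 2) (hq : 0 ≤ q)
    (hqR : q ≤ R / 2) : |q / (A * B) - q / R ^ 2| ≤ 64 * p / R ^ 2 := by
  have hp : 0 ≤ p := by linarith [abs_nonneg (A - R)]
  have hA0 : 0 < A := by linarith
  have hB0 : 0 < B := by linarith
  have hAB : |A * B - R ^ 2| ≤ 8 * p * R :=
    calc |A * B - R ^ 2| = |R * ((A - R) + (B - R)) + (A - R) * (B - R)| := by ring_nf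
      _ ≤ R * (|A - R| + |B - R|) + |A - R| * |B - R| := by
        grw [abs_add_le, abs_mul, abs_mul, abs_of_pos hR, abs_add_le]
      _ ≤ R * (2 * p + 3 * p) + 2 * p * (3 * p) := by gcongr
      _ ≤ 8 * p * R := by nlinarith
  calc |q / (A * B) - q / R ^ 2| = q * |A * B - R ^ 2| / (A * B * R ^ 2) := by
        have hABR : 0 < A * B * R ^ 2 := by positivity
        rw [div_sub_div _ _ (by positivity) (by positivity), mul_comm _ q, ← mul_sub, abs_div,
          abs_mul, abs_of_nonneg hq, abs_of_pos hABR, abs_sub_comm]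
    _ ≤ R / 2 * (8 * p * R) / (R / 4 * (R / 4) * R ^ 2) := by gcongr
    _ = 64 * p / R ^ 2 := by field_simp; ring

theorem mul_div_sq_le_div_mul {x y R : ℝ} (hx : 0 ≤ x) (hy : 0 ≤ y) (hyR : y ^ 2 ≤ R) :
    x * y / R ^ 2 ≤ x / (y * R) := by
  rcases hy.eq_or_lt with rfl | hy
  · simp
  have hR : 0 < R := lt_of_lt_of_le (by positivity) hyR
  rw [div_le_div_iff₀ (by positivity) (by positivity)]
  have := mul_le_mul_of_nonneg_left hyR (mul_nonneg hx hR.le)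
  nlinarith

theorem lintegral_Icc_ofReal_eq {f : ℝ → ℝ} {a b : ℝ} (hab : a ≤ b) (hf : IntegrableOn f (Icc a b))
    (hf₀ : ∀ t ∈ Icc a b, 0 ≤ f t) :
    ∫⁻ t in Icc a b, ENNReal.ofReal (f t) = ENNReal.ofReal (∫ t in a..b, f t) := by
  rw [intervalIntegral.integral_of_le hab, ← integral_Icc_eq_integral_Ioc,
    ofReal_integral_eq_lintegral_ofReal hf (ae_restrict_of_forall_mem measurableSet_Icc hf₀)]

theorem lintegral_div_sq_add_sq_le {s : ℝ} (hs : 0 < s) :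
    ∫⁻ t in Icc (0 : ℝ) 1, ENNReal.ofReal (s / (s ^ 2 + t ^ 2)) ≤ ENNReal.ofReal (π / 2) := by
  rw [lintegral_Icc_ofReal_eq zero_le_one _ fun t _ => by positivity, integral_div_sq_add_sq]
  · simpa using ENNReal.ofReal_le_ofReal (arctan_lt_pi_div_two _).le
  · exact (continuous_const.div (by fun_prop) fun t => by positivity).integrableOn_Icc

theorem lintegral_inv_sq_le {b : ℝ} (hb : 0 < b) :
    ∫⁻ t in Icc b 1, ENNReal.ofReal (t ^ 2)⁻¹ ≤ ENNReal.ofReal b⁻¹ := by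
  rcases le_or_gt b 1 with hb1 | hb1
  · have h0 : (0 : ℝ) ∉ uIcc b 1 := by rw [uIcc_of_le hb1]; exact fun h => hb.not_ge h.1
    have hint : ∫ t in b..1, (t ^ 2)⁻¹ = b⁻¹ - 1 := by
      have := integral_zpow (a := b) (b := 1) (n := -2) (Or.inr ⟨by norm_num, h0⟩)
      norm_num at this
      rw [this]; ring
    have hcont : ContinuousOn (fun t : ℝ => (t ^ 2)⁻¹) (Icc b 1) :=
      (continuousOn_pow 2).inv₀ fun t ht => by have := hb.trans_le ht.1; positivity
    rw [lintegral_Icc_ofReal_eq hb1 hcont.integrableOn_Icc fun t _ => by positivity, hint]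
    exact ENNReal.ofReal_le_ofReal (by linarith)
  · simp [Icc_eq_empty hb1.not_ge]

theorem lintegral_div_fst_mul_sq_add_sq_le {a : ℝ} (ha : 0 ≤ a) :
    ∫⁻ y in Icc (2 * a) 1 ×ˢ Icc (0 : ℝ) 1, ENNReal.ofReal (a / (y.1 * (y.1 ^ 2 + y.2 ^ 2))) ≤
      ENNReal.ofReal (π / 4) := by
  rcases ha.eq_or_lt with rfl | ha
  · simp
  rw [Measure.volume_eq_prod, ← Measure.prod_restrict, lintegral_prod _ (by fun_prop)]
  calc ∫⁻ s in Icc (2 * a) 1, ∫⁻ t in Icc (0 : ℝ) 1, ENNReal.ofReal (a / (s * (s ^ 2 + t ^ 2)))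
      = ∫⁻ s in Icc (2 * a) 1, ENNReal.ofReal a * ENNReal.ofReal (s ^ 2)⁻¹ *
          ∫⁻ t in Icc (0 : ℝ) 1, ENNReal.ofReal (s / (s ^ 2 + t ^ 2)) := by
        refine setLIntegral_congr_fun measurableSet_Icc fun s hs => ?_
        have hs : 0 < s := by linarith [hs.1]
        rw [← lintegral_const_mul _ (by fun_prop)]
        refine lintegral_congr fun t => ?_
        rw [← ENNReal.ofReal_mul ha.le, ← ENNReal.ofReal_mul (by positivity)]
        congr 1
        field_simp
    _ ≤ ∫⁻ s in Icc (2 * a) 1, ENNReal.ofReal a * ENNReal.ofReal (π / 2) *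
          ENNReal.ofReal (s ^ 2)⁻¹ := by
        refine setLIntegral_mono (by fun_prop) fun s hs => ?_
        rw [mul_right_comm]
        gcongr
        exact lintegral_div_sq_add_sq_le (by linarith [hs.1])
    _ ≤ ENNReal.ofReal a * ENNReal.ofReal (π / 2) * ENNReal.ofReal (2 * a)⁻¹ := by
        rw [lintegral_const_mul _ (by fun_prop)]
        gcongr
        exact lintegral_inv_sq_le (by positivity)
    _ = ENNReal.ofReal (π / 4) := by
        rw [← ENNReal.ofReal_mul ha.le, ← ENNReal.ofReal_mul (by positivity)]
        congr 1
        field_simp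
        ring

theorem lintegral_div_snd_mul_sq_add_sq_le {a : ℝ} (ha : 0 ≤ a) :
    ∫⁻ y in Icc (0 : ℝ) 1 ×ˢ Icc (2 * a) 1, ENNReal.ofReal (a / (y.2 * (y.1 ^ 2 + y.2 ^ 2))) ≤
      ENNReal.ofReal (π / 4) := by
  have hswap := lintegral_prod_swap (μ := volume.restrict (Icc (2 * a) 1))
    (ν := volume.restrict (Icc (0 : ℝ) 1))
    fun y => ENNReal.ofReal (a / (y.1 * (y.1 ^ 2 + y.2 ^ 2)))
  simp only [Prod.fst_swap, Prod.snd_swap] at hswap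
  simp only [add_comm (Prod.fst _ ^ 2)]
  rw [Measure.volume_eq_prod, ← Measure.prod_restrict, hswap, Measure.prod_restrict,
    ← Measure.volume_eq_prod]
  exact lintegral_div_fst_mul_sq_add_sq_le ha

theorem abs_kernel_sub_le_s9 {x₁ x₂ y₁ y₂ : ℝ} (hx₁ : 0 ≤ x₁) (hx₂ : 0 ≤ x₂) (h₁ : 2 * x₁ ≤ y₁)
    (h₂ : 2 * x₂ ≤ y₂) :
    |y₁ * y₂ / (((x₁ - y₁) ^ 2 + (x₂ - y₂) ^ 2) * ((x₁ + y₁) ^ 2 + (x₂ - y₂) ^ 2)) -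
        y₁ * y₂ / (y₁ ^ 2 + y₂ ^ 2) ^ 2| ≤
      64 * (x₁ / (y₁ * (y₁ ^ 2 + y₂ ^ 2)) + x₂ / (y₂ * (y₁ ^ 2 + y₂ ^ 2))) := by
  have hy₁ : 0 ≤ y₁ := by linarith
  have hy₂ : 0 ≤ y₂ := by linarith
  have hx₁y₁ : x₁ ^ 2 ≤ x₁ * y₁ / 2 := by nlinarith
  have hx₂y₂ : x₂ ^ 2 ≤ x₂ * y₂ / 2 := by nlinarith
  rcases (by positivity : 0 ≤ y₁ ^ 2 + y₂ ^ 2).eq_or_lt with hR | hR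
  · obtain rfl : y₁ = 0 := by nlinarith
    obtain rfl : y₂ = 0 := by nlinarith
    simp
  calc _ ≤ 64 * (x₁ * y₁ + x₂ * y₂) / (y₁ ^ 2 + y₂ ^ 2) ^ 2 := by
        refine abs_div_mul_sub_div_sq_le hR (by nlinarith) (by nlinarith) ?_ ?_ (by nlinarith)
          (by positivity) (by nlinarith [sq_nonneg (y₁ - y₂)]) <;>
        · rw [abs_le]; constructor <;> nlinarith
    _ = 64 * (x₁ * y₁ / (y₁ ^ 2 + y₂ ^ 2) ^ 2 + x₂ * y₂ / (y₁ ^ 2 + y₂ ^ 2) ^ 2) := by ring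
    _ ≤ _ := by
        gcongr 64 * (?_ + ?_)
        exacts [mul_div_sq_le_div_mul hx₁ hy₁ (le_add_of_nonneg_right (sq_nonneg _)),
          mul_div_sq_le_div_mul hx₂ hy₂ (le_add_of_nonneg_left (sq_nonneg _))]

/-- **Integrated kernel comparison on Q(2x) (Zlatoš, proof of Lemma 2.1).**  There is a
universal constant C such that for all x ∈ [0,1/2]² with x ≠ 0,
∫_{Q(2x)} | y₁y₂/(|x-y|²|x-ỹ|²) - y₁y₂/|y|⁴ | dy ≤ C, where ỹ = (-y₁,y₂). -/
theorem kernel_comparison_integral_bound :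
    ∃ C : ℝ, ∀ x : ℝ × ℝ,
      x ∈ Set.Icc ((0 : ℝ), (0 : ℝ)) ((1 / 2 : ℝ), (1 / 2 : ℝ)) → x ≠ (0, 0) →
      (∫⁻ y in Set.Icc (2 * x.1, 2 * x.2) ((1 : ℝ), (1 : ℝ)),
          ENNReal.ofReal
            |y.1 * y.2 /
                (((x.1 - y.1) ^ 2 + (x.2 - y.2) ^ 2) *
                  ((x.1 + y.1) ^ 2 + (x.2 - y.2) ^ 2)) -
              y.1 * y.2 / (y.1 ^ 2 + y.2 ^ 2) ^ 2|) ≤ ENNReal.ofReal C := by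
  refine ⟨32 * π, fun x hx _ => ?_⟩
  obtain ⟨hx₁, hx₂⟩ : 0 ≤ x.1 ∧ 0 ≤ x.2 := hx.1
  set Q := Icc (2 * x.1, 2 * x.2) ((1 : ℝ), (1 : ℝ))
  have hQ₁ : Q ⊆ Icc (2 * x.1) 1 ×ˢ Icc 0 1 := by
    rw [Icc_prod_Icc]; exact Icc_subset_Icc ⟨le_rfl, by simpa using hx₂⟩ le_rfl
  have hQ₂ : Q ⊆ Icc 0 1 ×ˢ Icc (2 * x.2) 1 := by
    rw [Icc_prod_Icc]; exact Icc_subset_Icc ⟨by simpa using hx₁, le_rfl⟩ le_rfl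
  calc _ ≤ ∫⁻ y in Q, ENNReal.ofReal 64 *
          (ENNReal.ofReal (x.1 / (y.1 * (y.1 ^ 2 + y.2 ^ 2))) +
            ENNReal.ofReal (x.2 / (y.2 * (y.1 ^ 2 + y.2 ^ 2)))) := by
        refine setLIntegral_mono (by fun_prop) fun y hy => ?_
        grw [abs_kernel_sub_le_s9 hx₁ hx₂ hy.1.1 hy.1.2, ENNReal.ofReal_mul (by norm_num),
          ENNReal.ofReal_add_le]
    _ = ENNReal.ofReal 64 * ((∫⁻ y in Q, ENNReal.ofReal (x.1 / (y.1 * (y.1 ^ 2 + y.2 ^ 2)))) +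
          ∫⁻ y in Q, ENNReal.ofReal (x.2 / (y.2 * (y.1 ^ 2 + y.2 ^ 2)))) := by
        rw [lintegral_const_mul _ (by fun_prop), lintegral_add_left (by fun_prop)]
    _ ≤ ENNReal.ofReal 64 * (ENNReal.ofReal (π / 4) + ENNReal.ofReal (π / 4)) := by
        grw [lintegral_mono_set hQ₁, lintegral_mono_set hQ₂,
          lintegral_div_fst_mul_sq_add_sq_le hx₁, lintegral_div_snd_mul_sq_add_sq_le hx₂]
    _ = ENNReal.ofReal (32 * π) := by
        rw [← ENNReal.ofReal_add (by positivity) (by positivity),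
          ← ENNReal.ofReal_mul (by norm_num)]
        ring_nf
end

section
/- For every x₁ ∈ (0, 1/2]: ∫₀^{x₁} ∫₀^1 x₁ z₂ / ( (z₁² + z₂²)(x₁² + z₂²) ) dz₂ dz₁ ≤ π²/4. -/
/-!
Swap the order of integration. For fixed z₂ the z₁-integral of (z₁² + z₂²)⁻¹, even over all of
[0, ∞), is π / (2 z₂); this cancels the factor z₂ and leaves (π/2) · x₁ / (x₁² + z₂²), whose
z₂-integral is bounded in the same way by (π/2)².
-/

open MeasureTheory Set

theorem inv_sq_add_sq_eq {c : ℝ} (hc : c ≠ 0) (z : ℝ) :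
    (z ^ 2 + c ^ 2)⁻¹ = (c ^ 2)⁻¹ * (1 + (c⁻¹ * z) ^ 2)⁻¹ := by
  field_simp
  ring

open Real in
theorem integral_Ioi_inv_sq_add_sq {c : ℝ} (hc : 0 < c) :
    ∫ z in Ioi (0 : ℝ), (z ^ 2 + c ^ 2)⁻¹ = π / 2 / c := by
  simp_rw [inv_sq_add_sq_eq hc.ne']
  rw [integral_const_mul, integral_comp_mul_left_Ioi (fun x => (1 + x ^ 2)⁻¹) 0 (inv_pos.2 hc)]
  simp only [mul_zero, integral_Ioi_inv_one_add_sq, arctan_zero, sub_zero, smul_eq_mul, inv_inv]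
  field_simp

theorem integrable_inv_sq_add_sq {c : ℝ} (hc : 0 < c) :
    Integrable fun z : ℝ => (z ^ 2 + c ^ 2)⁻¹ := by
  simp_rw [inv_sq_add_sq_eq hc.ne']
  exact (integrable_inv_one_add_sq.comp_mul_left' (inv_ne_zero hc.ne')).const_mul _

theorem ofReal_mul_setLIntegral_inv_sq_add_sq_le {c : ℝ} (hc : 0 ≤ c) (s : Set ℝ)
    (hs : s ⊆ Ici 0) :
    ENNReal.ofReal c * ∫⁻ z in s, ENNReal.ofReal ((z ^ 2 + c ^ 2)⁻¹) ≤
      ENNReal.ofReal (Real.pi / 2) := by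
  rcases hc.eq_or_lt with rfl | hc
  · simp
  calc ENNReal.ofReal c * ∫⁻ z in s, ENNReal.ofReal ((z ^ 2 + c ^ 2)⁻¹)
      ≤ ENNReal.ofReal c * ∫⁻ z in Ioi 0, ENNReal.ofReal ((z ^ 2 + c ^ 2)⁻¹) := by
        rw [setLIntegral_congr Ioi_ae_eq_Ici]
        gcongr
    _ = ENNReal.ofReal (Real.pi / 2) := by
        rw [← ofReal_integral_eq_lintegral_ofReal (integrable_inv_sq_add_sq hc).integrableOn
            (ae_of_all _ fun z => by positivity),
          integral_Ioi_inv_sq_add_sq hc, ← ENNReal.ofReal_mul hc.le]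
        field_simp

theorem setLIntegral_ofReal_mul_div_sq_add_sq_le {a y : ℝ} (ha : 0 ≤ a) (hy : 0 ≤ y) (s : Set ℝ)
    (hs : s ⊆ Ici 0) :
    ∫⁻ x in s, ENNReal.ofReal (a * y / ((x ^ 2 + y ^ 2) * (a ^ 2 + y ^ 2))) ≤
      ENNReal.ofReal a * ENNReal.ofReal ((y ^ 2 + a ^ 2)⁻¹) * ENNReal.ofReal (Real.pi / 2) := by
  have h_factor : ∀ x : ℝ, ENNReal.ofReal (a * y / ((x ^ 2 + y ^ 2) * (a ^ 2 + y ^ 2))) =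
      ENNReal.ofReal a * ENNReal.ofReal ((y ^ 2 + a ^ 2)⁻¹) *
        (ENNReal.ofReal y * ENNReal.ofReal ((x ^ 2 + y ^ 2)⁻¹)) := by
    intro x
    rw [← ENNReal.ofReal_mul ha, ← ENNReal.ofReal_mul hy, ← ENNReal.ofReal_mul (by positivity)]
    congr 1
    rw [div_eq_mul_inv, mul_inv, add_comm (y ^ 2)]
    ring
  simp_rw [h_factor]
  rw [lintegral_const_mul' _ _ (by finiteness), lintegral_const_mul' _ _ ENNReal.ofReal_ne_top]
  gcongr
  exact ofReal_mul_setLIntegral_inv_sq_add_sq_le hy s hs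

/-- **Elementary integral bound (Zlatoš, proof of Lemma 2.1).**  For x₁ ∈ (0,1/2],
∫₀^{x₁} ∫₀^1 x₁z₂/((z₁²+z₂²)(x₁²+z₂²)) dz₂ dz₁ ≤ π²/4. -/
theorem strip_integral_bound (x₁ : ℝ) (hx₁ : x₁ ∈ Set.Ioc (0 : ℝ) (1 / 2)) :
    (∫⁻ z₁ in Set.Icc (0 : ℝ) x₁, ∫⁻ z₂ in Set.Icc (0 : ℝ) 1,
        ENNReal.ofReal (x₁ * z₂ / ((z₁ ^ 2 + z₂ ^ 2) * (x₁ ^ 2 + z₂ ^ 2)))) ≤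
      ENNReal.ofReal (Real.pi ^ 2 / 4) := by
  have hx₁0 : 0 ≤ x₁ := hx₁.1.le
  calc (∫⁻ z₁ in Icc (0 : ℝ) x₁, ∫⁻ z₂ in Icc (0 : ℝ) 1,
          ENNReal.ofReal (x₁ * z₂ / ((z₁ ^ 2 + z₂ ^ 2) * (x₁ ^ 2 + z₂ ^ 2))))
      = ∫⁻ z₂ in Icc (0 : ℝ) 1, ∫⁻ z₁ in Icc (0 : ℝ) x₁,
          ENNReal.ofReal (x₁ * z₂ / ((z₁ ^ 2 + z₂ ^ 2) * (x₁ ^ 2 + z₂ ^ 2))) :=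
        lintegral_lintegral_swap (by fun_prop)
    _ ≤ ∫⁻ z₂ in Icc (0 : ℝ) 1,
          ENNReal.ofReal x₁ * ENNReal.ofReal ((z₂ ^ 2 + x₁ ^ 2)⁻¹) * ENNReal.ofReal (Real.pi / 2) :=
        setLIntegral_mono' measurableSet_Icc fun z₂ hz₂ =>
          setLIntegral_ofReal_mul_div_sq_add_sq_le hx₁0 hz₂.1 _ Icc_subset_Ici_self
    _ = ENNReal.ofReal x₁ * (∫⁻ z₂ in Icc (0 : ℝ) 1, ENNReal.ofReal ((z₂ ^ 2 + x₁ ^ 2)⁻¹)) *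
          ENNReal.ofReal (Real.pi / 2) := by
        rw [lintegral_mul_const' _ _ ENNReal.ofReal_ne_top,
          lintegral_const_mul' _ _ ENNReal.ofReal_ne_top]
    _ ≤ ENNReal.ofReal (Real.pi / 2) * ENNReal.ofReal (Real.pi / 2) := by
        gcongr
        exact ofReal_mul_setLIntegral_inv_sq_add_sq_le hx₁0 _ Icc_subset_Ici_self
    _ = ENNReal.ofReal (Real.pi ^ 2 / 4) := by
        rw [← ENNReal.ofReal_mul (by positivity)]
        congr 1
        ring
end

section
/- For all real numbers x₁, x₂ with 0 < x₁ ≤ 1 and 0 < x₂: ∫_{x₁}^1 ∫₀^{x₂} z₁ z₂ / (z₁² + z₂²)² dz₂ dz₁ ≤ log( 1 + x₂/x₁ ). -/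
open MeasureTheory Set

/-!
The inner integral has the elementary antiderivative `-z₁ / (2 (z₁² + z₂²))` and equals
`x₂² / (2 z₁ (z₁² + x₂²))`, which in turn is the derivative of `-log (1 + (x₂/z₁)²) / 4`.
Hence the double integral is `(log (1 + (x₂/x₁)²) - log (1 + x₂²)) / 4 ≤ log (1 + (x₂/x₁)²) / 4`,
and `1 + t² ≤ (1 + t)²` bounds this by `log (1 + x₂/x₁) / 2`.
-/

theorem lintegral_Icc_ofReal_eq_sub_of_hasDerivAt {f f' : ℝ → ℝ} {a b : ℝ} (hab : a ≤ b)
    (hcont : ContinuousOn f (Icc a b)) (hderiv : ∀ x ∈ Ioo a b, HasDerivAt f (f' x) x)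
    (hpos : ∀ x ∈ Ioo a b, 0 ≤ f' x) :
    ∫⁻ x in Icc a b, ENNReal.ofReal (f' x) = ENNReal.ofReal (f b - f a) := by
  have hint : IntegrableOn f' (Ioc a b) :=
    intervalIntegral.integrableOn_deriv_of_nonneg hcont hderiv hpos
  rw [← Measure.restrict_congr_set Ioo_ae_eq_Icc,
    ← ofReal_integral_eq_lintegral_ofReal (hint.mono_set Ioo_subset_Ioc_self)
      ((ae_restrict_iff' measurableSet_Ioo).2 (.of_forall hpos)),
    ← integral_Ioc_eq_integral_Ioo, ← intervalIntegral.integral_of_le hab,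
    intervalIntegral.integral_eq_sub_of_hasDerivAt_of_le hab hcont hderiv
      ((intervalIntegrable_iff_integrableOn_Ioc_of_le hab).2 hint)]

theorem hasDerivAt_neg_div_two_mul_sq_add_sq {c : ℝ} (hc : c ≠ 0) (y : ℝ) :
    HasDerivAt (fun y ↦ -c / (2 * (c ^ 2 + y ^ 2))) (c * y / (c ^ 2 + y ^ 2) ^ 2) y := by
  have h := (((hasDerivAt_id' y).fun_pow 2).const_add (c ^ 2)).const_mul 2
  refine ((hasDerivAt_const y (-c)).fun_div h (by positivity)).congr_deriv ?_
  field_simp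
  ring

theorem lintegral_Icc_zero_ofReal_mul_div_sq_add_sq_sq {c : ℝ} (hc : 0 < c) {t : ℝ} (ht : 0 ≤ t) :
    ∫⁻ y in Icc 0 t, ENNReal.ofReal (c * y / (c ^ 2 + y ^ 2) ^ 2) =
      ENNReal.ofReal (t ^ 2 / (2 * c * (c ^ 2 + t ^ 2))) := by
  have hderiv := hasDerivAt_neg_div_two_mul_sq_add_sq hc.ne'
  rw [lintegral_Icc_ofReal_eq_sub_of_hasDerivAt ht
    (fun y _ ↦ (hderiv y).continuousAt.continuousWithinAt) (fun y _ ↦ hderiv y)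
    (fun y hy ↦ by have := hy.1; positivity)]
  congr 1
  field_simp
  ring

theorem hasDerivAt_neg_log_one_add_div_sq_div_four (t : ℝ) {z : ℝ} (hz : z ≠ 0) :
    HasDerivAt (fun z ↦ -Real.log (1 + (t / z) ^ 2) / 4) (t ^ 2 / (2 * z * (z ^ 2 + t ^ 2))) z := by
  have h := (((hasDerivAt_const z t).fun_div (hasDerivAt_id' z) hz).fun_pow 2).const_add 1
  refine ((h.log (by positivity)).fun_neg.div_const 4).congr_deriv ?_
  norm_num
  field_simp
  ring

theorem lintegral_Icc_ofReal_sq_div_two_mul_mul_sq_add_sq {a b : ℝ} (ha : 0 < a) (hab : a ≤ b)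
    (t : ℝ) :
    ∫⁻ z in Icc a b, ENNReal.ofReal (t ^ 2 / (2 * z * (z ^ 2 + t ^ 2))) =
      ENNReal.ofReal ((Real.log (1 + (t / a) ^ 2) - Real.log (1 + (t / b) ^ 2)) / 4) := by
  have hderiv (z : ℝ) (hz : z ∈ Icc a b) := hasDerivAt_neg_log_one_add_div_sq_div_four t
    (ha.trans_le hz.1).ne'
  rw [lintegral_Icc_ofReal_eq_sub_of_hasDerivAt hab
    (fun z hz ↦ (hderiv z hz).continuousAt.continuousWithinAt)
    (fun z hz ↦ hderiv z (Ioo_subset_Icc_self hz))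
    (fun z hz ↦ by have := ha.trans hz.1; positivity)]
  congr 1
  ring

theorem Real.log_one_add_sq_le {t : ℝ} (ht : 0 ≤ t) :
    Real.log (1 + t ^ 2) ≤ 2 * Real.log (1 + t) :=
  calc Real.log (1 + t ^ 2) ≤ Real.log ((1 + t) ^ 2) :=
        Real.log_le_log (by positivity) (by nlinarith)
    _ = 2 * Real.log (1 + t) := by simp [Real.log_pow]

/-- **Elementary integral bound (Zlatoš, proof of Lemma 2.1).**  For 0 < x₁ ≤ 1 and
0 < x₂, ∫_{x₁}^1 ∫₀^{x₂} z₁z₂/(z₁²+z₂²)² dz₂ dz₁ ≤ log(1 + x₂/x₁). -/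
theorem corner_integral_log_bound (x₁ x₂ : ℝ) (hx₁ : 0 < x₁) (hx₁' : x₁ ≤ 1)
    (hx₂ : 0 < x₂) :
    (∫⁻ z₁ in Set.Icc x₁ 1, ∫⁻ z₂ in Set.Icc (0 : ℝ) x₂,
        ENNReal.ofReal (z₁ * z₂ / (z₁ ^ 2 + z₂ ^ 2) ^ 2)) ≤
      ENNReal.ofReal (Real.log (1 + x₂ / x₁)) := by
  rw [setLIntegral_congr_fun measurableSet_Icc fun z₁ hz₁ ↦
      lintegral_Icc_zero_ofReal_mul_div_sq_add_sq_sq (hx₁.trans_le hz₁.1) hx₂.le,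
    lintegral_Icc_ofReal_sq_div_two_mul_mul_sq_add_sq hx₁ hx₁']
  refine ENNReal.ofReal_le_ofReal ?_
  have hratio : 0 ≤ x₂ / x₁ := by positivity
  have hdrop : 0 ≤ Real.log (1 + (x₂ / 1) ^ 2) := Real.log_nonneg (by nlinarith)
  have hlog : 0 ≤ Real.log (1 + x₂ / x₁) := Real.log_nonneg (by linarith)
  linarith [Real.log_one_add_sq_le hratio]
end

section
/- There is a universal constant C < ∞ with the following property. Let 0 < x₁ < x₂ ≤ 1/2, set x = (x₁, x₂), and let ω : [0,2x₂]² → ℝ be Lipschitz with ‖∇ω‖_{L^∞([0,2x₂]²)} ≤ M. Then | ∫_{2x₁}^{2x₂} ∫₀^{2x₂} y₁ (x₂ − y₂) / ( |x−y|² |x−ỹ|² ) ω(y) dy₂ dy₁ | ≤ C M x₂, where ỹ := (−y₁, y₂). -/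
open MeasureTheory Set

noncomputable section

/-!
For fixed `y₁`, the kernel is odd in `y₂` about `x₂`, so its integral over `[0, 2x₂]` vanishes
and `ω(y₁, y₂)` may be replaced by `ω(y₁, y₂) - ω(y₁, x₂)`, which is at most `M |x₂ - y₂|`.
This extra factor cancels against `|x - ỹ|² ≥ (x₂ - y₂)²`, leaving `y₁ M / |x - y|²`, whose
`y₂`-integral is at most `π y₁ M / (y₁ - x₁) ≤ 2π M` because `y₁ ≥ 2x₁`. Integrating over
`y₁ ∈ [2x₁, 2x₂]` gives the constant `C = 4π`.
-/

theorem integral_inv_sq_add_sq_le {a : ℝ} (ha : a ≠ 0) (c u v : ℝ) :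
    ∫ t in u..v, (a ^ 2 + (c - t) ^ 2)⁻¹ ≤ Real.pi / |a| := by
  have hrescale : ∀ t, (a ^ 2 + (c - t) ^ 2)⁻¹ = (a ^ 2)⁻¹ * (1 + (c / a - t / a) ^ 2)⁻¹ := by
    intro t
    rw [← mul_inv, mul_add, mul_one, ← mul_pow, mul_sub, mul_div_cancel₀ _ ha,
      mul_div_cancel₀ _ ha]
  simp_rw [hrescale, intervalIntegral.integral_const_mul,
    intervalIntegral.integral_comp_sub_div (fun x => (1 + x ^ 2)⁻¹) ha,
    integral_inv_one_add_sq, smul_eq_mul]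
  set D := Real.arctan (c / a - u / a) - Real.arctan (c / a - v / a)
  have hD : |D| ≤ Real.pi := by
    have := Real.arctan_lt_pi_div_two (c / a - u / a)
    have := Real.neg_pi_div_two_lt_arctan (c / a - u / a)
    have := Real.arctan_lt_pi_div_two (c / a - v / a)
    have := Real.neg_pi_div_two_lt_arctan (c / a - v / a)
    exact abs_sub_le_iff.mpr ⟨by linarith, by linarith⟩
  calc (a ^ 2)⁻¹ * (a * D) = D / a := by field_simp
    _ ≤ |D| / |a| := abs_div D a ▸ le_abs_self _
    _ ≤ Real.pi / |a| := by gcongr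

theorem intervalIntegral.integral_eq_zero_of_comp_add_sub_eq_neg {f : ℝ → ℝ} {a b : ℝ}
    (hf : ∀ t, f (a + b - t) = -f t) : ∫ t in a..b, f t = 0 := by
  have hreflect := intervalIntegral.integral_comp_sub_left f (a + b) (a := a) (b := b)
  simp only [hf, intervalIntegral.integral_neg, add_sub_cancel_right,
    add_sub_cancel_left] at hreflect
  linarith

/-- No integrability of `K * g` is needed: if it fails, both sides are `0`. -/
theorem intervalIntegral.integral_mul_sub_const_of_integral_eq_zero {K g : ℝ → ℝ} {a b : ℝ}
    (hK : IntervalIntegrable K volume a b) (hK₀ : ∫ t in a..b, K t = 0) (c : ℝ) :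
    ∫ t in a..b, K t * (g t - c) = ∫ t in a..b, K t * g t := by
  have hKc : IntervalIntegrable (fun t => K t * c) volume a b := hK.mul_const c
  simp_rw [mul_sub]
  by_cases hKg : IntervalIntegrable (fun t => K t * g t) volume a b
  · rw [intervalIntegral.integral_sub hKg hKc, intervalIntegral.integral_mul_const, hK₀,
      zero_mul, sub_zero]
  · have hKg' : ¬ IntervalIntegrable (fun t => K t * g t - K t * c) volume a b :=
      fun h => hKg (by simpa using h.add hKc)
    rw [intervalIntegral.integral_undef hKg, intervalIntegral.integral_undef hKg']

/-- The kernel `y₁ (x₂ - y₂) / (|x - y|² |x - ỹ|²)` with `x = (x₁, x₂)`, `ỹ = (-y₁, y₂)`. -/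
def stripKernel (x₁ x₂ y₁ y₂ : ℝ) : ℝ :=
  y₁ * (x₂ - y₂) / (((x₁ - y₁) ^ 2 + (x₂ - y₂) ^ 2) * ((x₁ + y₁) ^ 2 + (x₂ - y₂) ^ 2))

theorem stripKernel_two_mul_sub (x₁ x₂ y₁ y₂ : ℝ) :
    stripKernel x₁ x₂ y₁ (2 * x₂ - y₂) = -stripKernel x₁ x₂ y₁ y₂ := by
  unfold stripKernel
  ring

theorem continuous_stripKernel {x₁ x₂ y₁ : ℝ} (h₁ : x₁ ≠ y₁) (h₂ : x₁ + y₁ ≠ 0) :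
    Continuous (stripKernel x₁ x₂ y₁) := by
  refine Continuous.div (by fun_prop) (by fun_prop) fun t => mul_ne_zero ?_ ?_ <;>
    positivity [sub_ne_zero.mpr h₁]

theorem abs_stripKernel_mul_abs_le (x₁ x₂ y₁ y₂ : ℝ) :
    |stripKernel x₁ x₂ y₁ y₂| * |x₂ - y₂| ≤ |y₁| / ((x₁ - y₁) ^ 2 + (x₂ - y₂) ^ 2) := by
  set A := (x₁ - y₁) ^ 2 + (x₂ - y₂) ^ 2
  set B := (x₁ + y₁) ^ 2 + (x₂ - y₂) ^ 2
  have hfrac : (x₂ - y₂) ^ 2 / B ≤ 1 :=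
    div_le_one_of_le₀ (le_add_of_nonneg_left (sq_nonneg _)) (by positivity)
  calc |stripKernel x₁ x₂ y₁ y₂| * |x₂ - y₂| = |y₁| / A * ((x₂ - y₂) ^ 2 / B) := by
        rw [stripKernel, abs_div, abs_mul, abs_of_nonneg (by positivity : 0 ≤ A * B),
          div_eq_mul_inv, mul_inv, ← sq_abs (x₂ - y₂)]
        ring
    _ ≤ |y₁| / A := mul_le_of_le_one_right (by positivity) hfrac

theorem abs_integral_stripKernel_mul_le {x₁ x₂ y₁ M : ℝ} {g : ℝ → ℝ} (hx₁ : 0 < x₁)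
    (hy₁ : 2 * x₁ ≤ y₁) (hx₂ : 0 ≤ x₂) (hM : 0 ≤ M)
    (hg : ∀ t ∈ Icc 0 (2 * x₂), |g t - g x₂| ≤ M * |x₂ - t|) :
    |∫ t in 0..2 * x₂, stripKernel x₁ x₂ y₁ t * g t| ≤ 2 * Real.pi * M := by
  have hxy : x₁ - y₁ ≠ 0 := by linarith
  have hdist : ∀ t, (x₁ - y₁) ^ 2 + (x₂ - t) ^ 2 ≠ 0 := fun t => by positivity
  have hK : Continuous (stripKernel x₁ x₂ y₁) :=
    continuous_stripKernel (by linarith) (by linarith)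
  have hK₀ : ∫ t in 0..2 * x₂, stripKernel x₁ x₂ y₁ t = 0 :=
    intervalIntegral.integral_eq_zero_of_comp_add_sub_eq_neg fun t => by
      rw [zero_add, stripKernel_two_mul_sub]
  have hpointwise : ∀ t ∈ Icc 0 (2 * x₂), ‖stripKernel x₁ x₂ y₁ t * (g t - g x₂)‖ ≤
      M * y₁ * ((x₁ - y₁) ^ 2 + (x₂ - t) ^ 2)⁻¹ := fun t ht =>
    calc ‖stripKernel x₁ x₂ y₁ t * (g t - g x₂)‖
        ≤ |stripKernel x₁ x₂ y₁ t| * (M * |x₂ - t|) := by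
          rw [Real.norm_eq_abs, abs_mul]; gcongr; exact hg t ht
      _ = M * (|stripKernel x₁ x₂ y₁ t| * |x₂ - t|) := by ring
      _ ≤ M * (|y₁| / ((x₁ - y₁) ^ 2 + (x₂ - t) ^ 2)) := by
          gcongr; exact abs_stripKernel_mul_abs_le x₁ x₂ y₁ t
      _ = M * y₁ * ((x₁ - y₁) ^ 2 + (x₂ - t) ^ 2)⁻¹ := by
          rw [abs_of_nonneg (by linarith)]; ring
  rw [← intervalIntegral.integral_mul_sub_const_of_integral_eq_zero
    (hK.intervalIntegrable _ _) hK₀ (g x₂), ← Real.norm_eq_abs]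
  calc ‖∫ t in 0..2 * x₂, stripKernel x₁ x₂ y₁ t * (g t - g x₂)‖
      ≤ ∫ t in 0..2 * x₂, M * y₁ * ((x₁ - y₁) ^ 2 + (x₂ - t) ^ 2)⁻¹ :=
        intervalIntegral.norm_integral_le_of_norm_le (by linarith)
          (ae_of_all _ fun t ht => hpointwise t (Ioc_subset_Icc_self ht))
          (Continuous.intervalIntegrable (by fun_prop (disch := exact hdist)) _ _)
    _ ≤ M * y₁ * (Real.pi / |x₁ - y₁|) := by
        rw [intervalIntegral.integral_const_mul]
        gcongr
        · nlinarith
        · exact integral_inv_sq_add_sq_le hxy _ _ _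
    _ ≤ 2 * Real.pi * M := by
        rw [abs_of_neg (by linarith), mul_div_assoc', div_le_iff₀ (by linarith)]
        nlinarith [Real.pi_pos, mul_nonneg (mul_nonneg Real.pi_pos.le hM)
          (show 0 ≤ y₁ - 2 * x₁ by linarith)]

/-- **Cancellation estimate on the middle strip (Zlatoš, proof of Lemma 2.1).**  There
is a universal constant C such that for 0 < x₁ < x₂ ≤ 1/2 and any ω Lipschitz on
[0,2x₂]² with gradient bounded by M (expressed as a Euclidean Lipschitz bound),
| ∫_{2x₁}^{2x₂} ∫₀^{2x₂} y₁(x₂-y₂)/(|x-y|²|x-ỹ|²) ω(y) dy₂ dy₁ | ≤ C M x₂,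
where x = (x₁,x₂) and ỹ = (-y₁,y₂). -/
theorem middle_strip_cancellation_estimate :
    ∃ C : ℝ, ∀ (x₁ x₂ M : ℝ) (ω : ℝ × ℝ → ℝ),
      0 < x₁ → x₁ < x₂ → x₂ ≤ 1 / 2 → 0 ≤ M →
      (∀ y ∈ Set.Icc ((0 : ℝ), (0 : ℝ)) (2 * x₂, 2 * x₂),
        ∀ z ∈ Set.Icc ((0 : ℝ), (0 : ℝ)) (2 * x₂, 2 * x₂),
          |ω y - ω z| ≤ M * Real.sqrt ((y.1 - z.1) ^ 2 + (y.2 - z.2) ^ 2)) →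
      |∫ y₁ in Set.Icc (2 * x₁) (2 * x₂), ∫ y₂ in Set.Icc (0 : ℝ) (2 * x₂),
          y₁ * (x₂ - y₂) /
              (((x₁ - y₁) ^ 2 + (x₂ - y₂) ^ 2) * ((x₁ + y₁) ^ 2 + (x₂ - y₂) ^ 2)) *
            ω (y₁, y₂)| ≤ C * M * x₂ := by
  refine ⟨4 * Real.pi, fun x₁ x₂ M ω hx₁ hx₁₂ _ hM hω => ?_⟩
  have hslice : ∀ y₁ ∈ Icc (2 * x₁) (2 * x₂),
      ‖∫ y₂ in Icc 0 (2 * x₂), stripKernel x₁ x₂ y₁ y₂ * ω (y₁, y₂)‖ ≤ 2 * Real.pi * M := by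
    intro y₁ hy₁
    rw [integral_Icc_eq_integral_Ioc, ← intervalIntegral.integral_of_le (by linarith)]
    refine abs_integral_stripKernel_mul_le hx₁ hy₁.1 (by linarith) hM fun t ht => ?_
    have hmem : ∀ s ∈ Icc 0 (2 * x₂), (y₁, s) ∈ Icc ((0 : ℝ), (0 : ℝ)) (2 * x₂, 2 * x₂) :=
      fun s hs => ⟨⟨by linarith [hy₁.1], hs.1⟩, ⟨hy₁.2, hs.2⟩⟩
    simpa [Real.sqrt_sq_eq_abs, abs_sub_comm t x₂] using
      hω _ (hmem t ht) _ (hmem x₂ ⟨by linarith, by linarith⟩)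
  calc _ ≤ 2 * Real.pi * M * volume.real (Icc (2 * x₁) (2 * x₂)) :=
        norm_setIntegral_le_of_norm_le_const measure_Icc_lt_top hslice
    _ = 2 * Real.pi * M * (2 * x₂ - 2 * x₁) := by rw [Real.volume_real_Icc_of_le (by linarith)]
    _ ≤ 4 * Real.pi * M * x₂ := by
        nlinarith [mul_nonneg (mul_nonneg Real.pi_pos.le hM) hx₁.le]

end
end

section
/- There is a universal constant C > 0 with the following property. For every δ ∈ (0, 1/10), every measurable function ω : [0,1]² → [0,1] such that the Lebesgue measure of { y ∈ [0,1]² : ω(y) = 1 } is at least 1 − δ, and every x ∈ [0,δ]²: ∫_{Q(2x)} ( y₁ y₂ / |y|⁴ ) ω(y) dy ≥ (1/C) |log δ|. -/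
/-!
The dyadic squares `(2⁻ᵏ⁻¹, 2⁻ᵏ]²` with `8δ ≤ 4⁻ᵏ` are disjoint, lie in `Q(2x)`, and there are
about `|log δ| / 6` of them. On the `k`-th square the kernel is at least `4ᵏ / 16`, and since the
set where `ω ≠ 1` has measure at most `δ`, `ω = 1` on at least half of the square's area
`4⁻ᵏ / 4`. Each square therefore contributes at least `1 / 128` to the integral.
-/

open MeasureTheory Set Function

noncomputable section

def ksKernel (y : ℝ × ℝ) : ℝ := y.1 * y.2 / (y.1 ^ 2 + y.2 ^ 2) ^ 2

def dyadicSquare (r : ℝ) : Set (ℝ × ℝ) := Ioc (r / 2) r ×ˢ Ioc (r / 2) r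

lemma measurableSet_dyadicSquare (r : ℝ) : MeasurableSet (dyadicSquare r) :=
  measurableSet_Ioc.prod measurableSet_Ioc

lemma volume_dyadicSquare {r : ℝ} (hr : 0 ≤ r) :
    volume (dyadicSquare r) = ENNReal.ofReal ((r / 2) ^ 2) := by
  rw [dyadicSquare, Measure.volume_eq_prod, Measure.prod_prod, Real.volume_Ioc,
    ← ENNReal.ofReal_mul (by linarith)]
  ring_nf

lemma dyadicSquare_subset_Icc {a : ℝ × ℝ} {r : ℝ} (h₁ : a.1 ≤ r / 2) (h₂ : a.2 ≤ r / 2)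
    (hr : r ≤ 1) : dyadicSquare r ⊆ Icc a (1, 1) := by
  rintro y ⟨⟨hy₁, hy₁'⟩, hy₂, hy₂'⟩
  exact ⟨⟨by linarith, by linarith⟩, by linarith, by linarith⟩

lemma disjoint_dyadicSquare {r s : ℝ} (h : s ≤ r / 2) :
    Disjoint (dyadicSquare s) (dyadicSquare r) := by
  rw [Set.disjoint_left]
  rintro y ⟨⟨-, hys⟩, -⟩ ⟨⟨hyr, -⟩, -⟩
  linarith

lemma pairwise_disjoint_dyadicSquare_half_pow :
    Pairwise (Disjoint on fun k : ℕ => dyadicSquare ((1 / 2) ^ k)) := by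
  have key : ∀ i j : ℕ, i < j → Disjoint (dyadicSquare ((1 / 2 : ℝ) ^ j))
      (dyadicSquare ((1 / 2) ^ i)) := fun i j hij =>
    disjoint_dyadicSquare <| by
      calc ((1 : ℝ) / 2) ^ j ≤ (1 / 2) ^ (i + 1) :=
            pow_le_pow_of_le_one (by norm_num) (by norm_num) hij
        _ = (1 / 2) ^ i / 2 := by ring
  intro i j hij
  rcases hij.lt_or_gt with h | h
  · exact (key i j h).symm
  · exact key j i h

lemma one_div_le_ksKernel {r : ℝ} {y : ℝ × ℝ} (hy : y ∈ dyadicSquare r) :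
    1 / (16 * r ^ 2) ≤ ksKernel y := by
  obtain ⟨⟨hy₁, hy₁'⟩, hy₂, hy₂'⟩ := hy
  have hr : 0 < r := by linarith
  have hy₁0 : 0 < y.1 := by linarith
  have hy₂0 : 0 < y.2 := by linarith
  have hnum : r ^ 2 / 4 ≤ y.1 * y.2 := by nlinarith
  have hden : y.1 ^ 2 + y.2 ^ 2 ≤ 2 * r ^ 2 := by nlinarith
  calc 1 / (16 * r ^ 2) = (r ^ 2 / 4) / (2 * r ^ 2) ^ 2 := by field_simp; ring
    _ ≤ y.1 * y.2 / (y.1 ^ 2 + y.2 ^ 2) ^ 2 := by gcongr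

lemma ofReal_one_div_128_le_setLIntegral_dyadicSquare {G : Set (ℝ × ℝ)} {ω : ℝ × ℝ → ℝ}
    {r : ℝ} (hr : 0 < r) (hG : MeasurableSet G) (hω : ∀ y ∈ G, ω y = 1)
    (hbad : volume (dyadicSquare r \ G) ≤ ENNReal.ofReal (r ^ 2 / 8)) :
    ENNReal.ofReal (1 / 128) ≤
      ∫⁻ y in dyadicSquare r ∩ G, ENNReal.ofReal (ksKernel y * ω y) := by
  have hgood : ENNReal.ofReal (r ^ 2 / 8) ≤ volume (dyadicSquare r ∩ G) := by
    calc ENNReal.ofReal (r ^ 2 / 8)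
        = ENNReal.ofReal ((r / 2) ^ 2) - ENNReal.ofReal (r ^ 2 / 8) := by
          rw [← ENNReal.ofReal_sub _ (by positivity)]; ring_nf
      _ ≤ volume (dyadicSquare r) - volume (dyadicSquare r \ G) := by
          rw [volume_dyadicSquare hr.le]; gcongr
      _ ≤ volume (dyadicSquare r ∩ G) := by
          rw [← sdiff_sdiff_right_self]; exact le_measure_sdiff
  have hkernel : ∀ y ∈ dyadicSquare r ∩ G,
      ENNReal.ofReal (1 / (16 * r ^ 2)) ≤ ENNReal.ofReal (ksKernel y * ω y) := by
    rintro y ⟨hyS, hyG⟩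
    rw [hω y hyG, mul_one]
    exact ENNReal.ofReal_le_ofReal (one_div_le_ksKernel hyS)
  calc ENNReal.ofReal (1 / 128)
      = ENNReal.ofReal (1 / (16 * r ^ 2)) * ENNReal.ofReal (r ^ 2 / 8) := by
        rw [← ENNReal.ofReal_mul (by positivity)]; congr 1; field_simp; norm_num
    _ ≤ ∫⁻ _ in dyadicSquare r ∩ G, ENNReal.ofReal (1 / (16 * r ^ 2)) := by
        rw [setLIntegral_const]; gcongr
    _ ≤ _ := setLIntegral_mono' ((measurableSet_dyadicSquare r).inter hG) hkernel

lemma exists_nat_neg_log_le_and_sq_half_pow {δ : ℝ} (hδ0 : 0 < δ) (hδ : δ ≤ 1 / 8) :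
    ∃ N : ℕ, -Real.log δ / 6 ≤ N ∧ ∀ k < N, 8 * δ ≤ ((1 / 2 : ℝ) ^ k) ^ 2 := by
  refine ⟨⌈-Real.log δ / 6⌉₊, Nat.le_ceil _, fun k hk => ?_⟩
  rw [Nat.lt_ceil] at hk
  have hlog2 : 0 < Real.log 2 := Real.log_pos one_lt_two
  have hlog2' : Real.log 2 < 1 := by have := Real.log_two_lt_d9; linarith
  have hlogδ : Real.log δ ≤ -(3 * Real.log 2) := by
    calc Real.log δ ≤ Real.log (1 / 8) := Real.log_le_log hδ0 hδ
      _ = -(3 * Real.log 2) := by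
        rw [one_div, Real.log_inv, show (8 : ℝ) = 2 ^ 3 by norm_num, Real.log_pow]
        push_cast; ring
  have hexp : Real.log δ ≤ -((2 * k + 3) * Real.log 2) := by
    rcases k.eq_zero_or_pos with rfl | hk0
    · simpa using hlogδ
    · have hk1 : (1 : ℝ) ≤ k := by exact_mod_cast hk0
      nlinarith
  have hδk : δ ≤ ((2 : ℝ) ^ (2 * k + 3))⁻¹ := by
    rw [← Real.exp_log hδ0, ← Real.exp_log (by positivity : (0 : ℝ) < (2 ^ (2 * k + 3))⁻¹),
      Real.log_inv, Real.log_pow]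
    push_cast
    exact Real.exp_le_exp.mpr hexp
  calc 8 * δ ≤ 8 * ((2 : ℝ) ^ (2 * k + 3))⁻¹ := by gcongr
    _ = ((1 / 2 : ℝ) ^ k) ^ 2 := by rw [← pow_mul, one_div_pow, mul_comm k 2, pow_add]; ring

lemma card_mul_le_setLIntegral {α ι : Type*} [MeasurableSpace α] {μ : Measure α}
    {f : α → ENNReal} {s : Finset ι} {A : ι → Set α} {B : Set α} {c : ENNReal}
    (hdisj : (s : Set ι).PairwiseDisjoint A) (hA : ∀ i ∈ s, MeasurableSet (A i))
    (hAB : ∀ i ∈ s, A i ⊆ B) (hc : ∀ i ∈ s, c ≤ ∫⁻ x in A i, f x ∂μ) :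
    s.card * c ≤ ∫⁻ x in B, f x ∂μ :=
  calc s.card * c = ∑ _i ∈ s, c := by rw [Finset.sum_const, nsmul_eq_mul]
    _ ≤ ∑ i ∈ s, ∫⁻ x in A i, f x ∂μ := Finset.sum_le_sum hc
    _ = ∫⁻ x in ⋃ i ∈ s, A i, f x ∂μ := (lintegral_biUnion_finset hdisj hA f).symm
    _ ≤ ∫⁻ x in B, f x ∂μ := lintegral_mono_set (iUnion₂_subset hAB)

lemma measure_sdiff_le_ofReal_of_ofReal_one_sub_le {α : Type*} [MeasurableSpace α]
    {μ : Measure α} {S G : Set α} {δ : ℝ} (hGS : G ⊆ S) (hG : NullMeasurableSet G μ)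
    (hS : μ S = 1) (h : ENNReal.ofReal (1 - δ) ≤ μ G) : μ (S \ G) ≤ ENNReal.ofReal δ := by
  have hGfin : μ G ≠ ⊤ := ((measure_mono hGS).trans_lt (hS ▸ ENNReal.one_lt_top)).ne
  rw [measure_sdiff_le_iff_le_add hG hGS hGfin]
  calc μ S = ENNReal.ofReal ((1 - δ) + δ) := by rw [hS, sub_add_cancel, ENNReal.ofReal_one]
    _ ≤ ENNReal.ofReal (1 - δ) + ENNReal.ofReal δ := ENNReal.ofReal_add_le
    _ ≤ μ G + ENNReal.ofReal δ := by gcongr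

theorem ofReal_neg_log_div_le_setLIntegral_ksKernel {G : Set (ℝ × ℝ)} {ω : ℝ × ℝ → ℝ}
    {δ : ℝ} {a : ℝ × ℝ} (hδ0 : 0 < δ) (hδ : δ ≤ 1 / 8) (hG : MeasurableSet G)
    (hω : ∀ y ∈ G, ω y = 1)
    (hbad : volume (Icc ((0 : ℝ), (0 : ℝ)) (1, 1) \ G) ≤ ENNReal.ofReal δ)
    (ha₁ : a.1 ≤ 2 * δ) (ha₂ : a.2 ≤ 2 * δ) :
    ENNReal.ofReal (-Real.log δ / 768) ≤
      ∫⁻ y in Icc a (1, 1), ENNReal.ofReal (ksKernel y * ω y) := by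
  obtain ⟨N, hN, hscale⟩ := exists_nat_neg_log_le_and_sq_half_pow hδ0 hδ
  have hsub : ∀ k ∈ Finset.range N, dyadicSquare ((1 / 2) ^ k) ∩ G ⊆ Icc a (1, 1) := by
    intro k hk
    have hr0 : (0 : ℝ) < (1 / 2) ^ k := by positivity
    have hr1 : (1 / 2 : ℝ) ^ k ≤ 1 := pow_le_one₀ (by norm_num) (by norm_num)
    have hδk := hscale k (Finset.mem_range.mp hk)
    have hsq : ((1 / 2 : ℝ) ^ k) ^ 2 ≤ (1 / 2) ^ k := by nlinarith
    exact inter_subset_left.trans (dyadicSquare_subset_Icc (by linarith) (by linarith) hr1)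
  have hsquare : ∀ k ∈ Finset.range N, ENNReal.ofReal (1 / 128) ≤
      ∫⁻ y in dyadicSquare ((1 / 2) ^ k) ∩ G, ENNReal.ofReal (ksKernel y * ω y) := by
    intro k hk
    have hS : dyadicSquare ((1 / 2 : ℝ) ^ k) ⊆ Icc ((0 : ℝ), (0 : ℝ)) (1, 1) :=
      dyadicSquare_subset_Icc (by positivity) (by positivity)
        (pow_le_one₀ (by norm_num) (by norm_num))
    refine ofReal_one_div_128_le_setLIntegral_dyadicSquare (by positivity) hG hω ?_
    calc volume (dyadicSquare ((1 / 2) ^ k) \ G)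
        ≤ volume (Icc ((0 : ℝ), (0 : ℝ)) (1, 1) \ G) := measure_mono (sdiff_le_sdiff_right hS)
      _ ≤ ENNReal.ofReal (((1 / 2) ^ k) ^ 2 / 8) :=
        hbad.trans (ENNReal.ofReal_le_ofReal
          (by linarith [hscale k (Finset.mem_range.mp hk)]))
  calc ENNReal.ofReal (-Real.log δ / 768)
      ≤ (Finset.range N).card * ENNReal.ofReal (1 / 128) := by
        rw [Finset.card_range, ← ENNReal.ofReal_natCast, ← ENNReal.ofReal_mul (by positivity)]
        exact ENNReal.ofReal_le_ofReal (by linarith)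
    _ ≤ _ :=
      card_mul_le_setLIntegral
        (fun i _ j _ hij => (pairwise_disjoint_dyadicSquare_half_pow hij).mono
          inter_subset_left inter_subset_left)
        (fun k _ => (measurableSet_dyadicSquare _).inter hG) hsub hsquare

/-- **Key lower bound of Kiselev–Šverák (as used by Zlatoš).**  There is a universal
constant C > 0 such that for every δ ∈ (0,1/10), every measurable ω : [0,1]² → [0,1]
equal to 1 on a subset of [0,1]² of measure at least 1-δ, and every x ∈ [0,δ]²,
∫_{Q(2x)} (y₁y₂/|y|⁴) ω(y) dy ≥ (1/C)|log δ|. -/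
theorem key_integral_lower_bound :
    ∃ C : ℝ, 0 < C ∧ ∀ (δ : ℝ) (ω : ℝ × ℝ → ℝ) (x : ℝ × ℝ),
      δ ∈ Set.Ioo (0 : ℝ) (1 / 10) →
      Measurable ω →
      (∀ y ∈ Set.Icc ((0 : ℝ), (0 : ℝ)) ((1 : ℝ), (1 : ℝ)), ω y ∈ Set.Icc (0 : ℝ) 1) →
      ENNReal.ofReal (1 - δ) ≤
        volume {y ∈ Set.Icc ((0 : ℝ), (0 : ℝ)) ((1 : ℝ), (1 : ℝ)) | ω y = 1} →
      x ∈ Set.Icc ((0 : ℝ), (0 : ℝ)) (δ, δ) →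
      ENNReal.ofReal (1 / C * |Real.log δ|) ≤
        ∫⁻ y in Set.Icc (2 * x.1, 2 * x.2) ((1 : ℝ), (1 : ℝ)),
          ENNReal.ofReal (y.1 * y.2 / (y.1 ^ 2 + y.2 ^ 2) ^ 2 * ω y) := by
  refine ⟨768, by norm_num, ?_⟩
  rintro δ ω x ⟨hδ0, hδ⟩ hω - hgood ⟨-, hx₁, hx₂⟩
  have hGmeas : MeasurableSet {y ∈ Icc ((0 : ℝ), (0 : ℝ)) (1, 1) | ω y = 1} :=
    measurableSet_Icc.inter (hω (measurableSet_singleton 1))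
  have hvol : volume (Icc ((0 : ℝ), (0 : ℝ)) (1, 1)) = 1 := by
    rw [Icc_prod_eq, Measure.volume_eq_prod, Measure.prod_prod]
    simp [Real.volume_Icc]
  have hlog : |Real.log δ| = -Real.log δ := abs_of_neg (Real.log_neg hδ0 (by linarith))
  rw [hlog, one_div_mul_eq_div]
  exact ofReal_neg_log_div_le_setLIntegral_ksKernel (a := (2 * x.1, 2 * x.2)) hδ0 (by linarith)
    hGmeas (fun y hy => hy.2)
    (measure_sdiff_le_ofReal_of_ofReal_one_sub_le (fun y hy => hy.1) hGmeas.nullMeasurableSet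
      hvol hgood)
    (by dsimp only; linarith) (by dsimp only; linarith)

end
end
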